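/- arXiv:2512.23623 — 3 statements merged into one kernel-verified Lean document; each statement's English description precedes it below -/
import Mathlib

section
/- Let γ be a positive 1-nondegenerate α-homogeneous curvature function with γ̃(x,y)=γ(x,y,…,y), normalized appropriately. If g₊ is the implicit function with γ̃(g₊(y,1), y) = 1, then g₊ extends continuously to the endpoints of its domain with g₊(γ̃(1,1)^{-1/α}, 1) = γ̃(1,1)^{-1/α} and g₊(γ̃(0,1)^{-1/α}, 1) = 0. -/
open Real Filter Set

/-- Continuous extension of `g₊(·,1)` to the endpoints of its domain:
`g₊(γ̃(1,1)^{-1/α},1) = γ̃(1,1)^{-1/α}` and `g₊(γ̃(0,1)^{-1/α},1) = 0`. -/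
theorem stmt2 (α : ℝ) (hα : 0 < α) (γ : ℝ → ℝ → ℝ)
    (hcont : Continuous fun p : ℝ × ℝ => γ p.1 p.2)
    (hmx : ∀ y : ℝ, StrictMono fun x => γ x y)
    (hmy : ∀ x : ℝ, StrictMono fun y => γ x y)
    (hhom : ∀ c : ℝ, 0 < c → ∀ x y : ℝ, γ (c * x) (c * y) = c ^ α * γ x y)
    (hpos01 : 0 < γ 0 1) (hpos11 : 0 < γ 1 1)
    (g : ℝ → ℝ)
    (hg : ∀ y ∈ Set.Ioo ((γ 1 1) ^ (-(1:ℝ)/α)) ((γ 0 1) ^ (-(1:ℝ)/α)),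
      γ (g y) y = 1 ∧ 0 < g y) :
    Filter.Tendsto g
        (nhdsWithin ((γ 1 1) ^ (-(1:ℝ)/α)) (Set.Ioi ((γ 1 1) ^ (-(1:ℝ)/α))))
        (nhds ((γ 1 1) ^ (-(1:ℝ)/α))) ∧
    Filter.Tendsto g
        (nhdsWithin ((γ 0 1) ^ (-(1:ℝ)/α)) (Set.Iio ((γ 0 1) ^ (-(1:ℝ)/α))))
        (nhds 0) := by
  set a : ℝ := (γ 1 1) ^ (-(1:ℝ)/α) with ha
  set b : ℝ := (γ 0 1) ^ (-(1:ℝ)/α) with hb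
  have hαne : α ≠ 0 := hα.ne'
  have hapos : 0 < a := Real.rpow_pos_of_pos hpos11 _
  have hbpos : 0 < b := Real.rpow_pos_of_pos hpos01 _
  have h01 : γ 0 1 < γ 1 1 := hmx 1 one_pos
  have hab : a < b := Real.rpow_lt_rpow_of_neg hpos01 h01 (by
    rw [neg_div]; exact neg_neg_iff_pos.mpr (by positivity))
  -- a ^ α = (γ 1 1)⁻¹ and b ^ α = (γ 0 1)⁻¹
  have haα : a ^ α = (γ 1 1)⁻¹ := by
    rw [ha, ← Real.rpow_mul hpos11.le,
      show (-(1:ℝ)/α) * α = -1 by field_simp, Real.rpow_neg_one]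
  have hbα : b ^ α = (γ 0 1)⁻¹ := by
    rw [hb, ← Real.rpow_mul hpos01.le,
      show (-(1:ℝ)/α) * α = -1 by field_simp, Real.rpow_neg_one]
  have hγaa : γ a a = 1 := by
    have := hhom a hapos 1 1
    rw [mul_one] at this
    rw [this, haα, inv_mul_cancel₀ hpos11.ne']
  have hγ0b : γ 0 b = 1 := by
    have := hhom b hbpos 0 1
    rw [mul_zero, mul_one] at this
    rw [this, hbα, inv_mul_cancel₀ hpos01.ne']
  have hcy : ∀ c : ℝ, Continuous fun y => γ c y :=
    fun c => hcont.comp (continuous_const.prodMk continuous_id)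
  have hIooA : ∀ᶠ y in nhdsWithin a (Set.Ioi a), y ∈ Set.Ioo a b :=
    Ioo_mem_nhdsGT_of_mem (by constructor <;> simp [hab, le_refl])
  have hIooB : ∀ᶠ y in nhdsWithin b (Set.Iio b), y ∈ Set.Ioo a b :=
    Ioo_mem_nhdsLT_of_mem (by constructor <;> simp [hab, le_refl])
  constructor
  · refine tendsto_order.2 ⟨fun c hc => ?_, fun c hc => ?_⟩
    · -- c < a : eventually c < g y
      have hlt : γ c a < 1 := by rw [← hγaa]; exact hmx a hc
      have htd : Filter.Tendsto (fun y => γ c y) (nhdsWithin a (Set.Ioi a)) (nhds (γ c a)) :=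
        ((hcy c).tendsto a).mono_left nhdsWithin_le_nhds
      filter_upwards [hIooA, htd.eventually_lt_const hlt] with y hy hlt'
      have h1 : γ c y < γ (g y) y := by rw [(hg y hy).1]; exact hlt'
      exact (hmx y).lt_iff_lt.mp h1
    · -- a < c : eventually g y < c
      filter_upwards [hIooA] with y hy
      have h1 : γ (g y) y < γ a y := by
        rw [(hg y hy).1, ← hγaa]
        exact hmy a hy.1
      exact lt_trans ((hmx y).lt_iff_lt.mp h1) hc
  · refine tendsto_order.2 ⟨fun c hc => ?_, fun c hc => ?_⟩
    · -- c < 0 : eventually c < g y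
      filter_upwards [hIooB] with y hy
      exact lt_trans hc (hg y hy).2
    · -- 0 < c : eventually g y < c
      have hlt : 1 < γ c b := by rw [← hγ0b]; exact hmx b hc
      have htd : Filter.Tendsto (fun y => γ c y) (nhdsWithin b (Set.Iio b)) (nhds (γ c b)) :=
        ((hcy c).tendsto b).mono_left nhdsWithin_le_nhds
      filter_upwards [hIooB, htd.eventually_const_lt hlt] with y hy hlt'
      have h1 : γ (g y) y < γ c y := by rw [(hg y hy).1]; exact hlt'
      exact (hmx y).lt_iff_lt.mp h1
end

section
/- Comparison principle: Let β < 1/2, let g : I → ℝ be continuous and decreasing on an interval I ⊂ ℝ, and let r₀ > 0. Suppose v, w ∈ C¹([r₀,∞)) satisfy v' = (1+v²)^{β+1} g(v/(r(1+v²)^β)) and w' ≥ (1+w²)^{β+1} g(w/(r(1+w²)^β)) on [r₀,∞), with v(r₀) ≤ w(r₀), and assume both v/(r(1+v²)^β) and w/(r(1+w²)^β) remain in I. Then v(r) ≤ w(r) for all r ≥ r₀. -/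
open Real Set

lemma one_add_sq_pos (x : ℝ) : (0:ℝ) < 1 + x ^ 2 := by positivity

lemma psi_hasDeriv (β : ℝ) (x : ℝ) :
    HasDerivAt (fun x : ℝ => x * (1 + x ^ 2) ^ (-β))
      ((1 + x ^ 2) ^ (-β - 1) * (1 + (1 - 2 * β) * x ^ 2)) x := by
  have hpos := one_add_sq_pos x
  have h1 : HasDerivAt (fun x : ℝ => 1 + x ^ 2) (2 * x) x := by
    simpa using ((hasDerivAt_pow 2 x).const_add 1)
  have h2 : HasDerivAt (fun x : ℝ => (1 + x ^ 2) ^ (-β))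
      (2 * x * (-β) * (1 + x ^ 2) ^ (-β - 1)) x :=
    h1.rpow_const (Or.inl hpos.ne')
  have h3 : HasDerivAt (fun y : ℝ => y * (1 + y ^ 2) ^ (-β)) _ x := (hasDerivAt_id x).mul h2
  convert h3 using 1
  have hadd : (1 + x ^ 2 : ℝ) ^ (-β) = (1 + x ^ 2) ^ (-β - 1) * (1 + x ^ 2) := by
    rw [← rpow_add_one hpos.ne' (-β - 1)]; ring_nf
  simp only [id_eq]
  rw [hadd]; ring

lemma psi_mono (β : ℝ) (hβ : β < 1/2) :
    StrictMono (fun x : ℝ => x * (1 + x ^ 2) ^ (-β)) := by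
  apply strictMono_of_hasDerivAt_pos (f' := fun x =>
    (1 + x ^ 2) ^ (-β - 1) * (1 + (1 - 2 * β) * x ^ 2)) (psi_hasDeriv β)
  intro x
  have h1 : (0:ℝ) < (1 + x ^ 2) ^ (-β - 1) := rpow_pos_of_pos (one_add_sq_pos x) _
  have h2 : (0:ℝ) < 1 + (1 - 2 * β) * x ^ 2 := by nlinarith [sq_nonneg x]
  positivity

lemma Phi_hasDeriv (β : ℝ) (x : ℝ) :
    HasDerivAt (fun x : ℝ => ∫ t in (0:ℝ)..x, (1 + t ^ 2) ^ (-(β + 1)))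
      ((1 + x ^ 2) ^ (-(β + 1))) x := by
  have hc : Continuous (fun t : ℝ => (1 + t ^ 2) ^ (-(β + 1))) := by
    apply Continuous.rpow_const (by continuity)
    intro t; exact Or.inl (one_add_sq_pos t).ne'
  exact (hc.integral_hasStrictDerivAt 0 x).hasDerivAt

lemma Phi_mono (β : ℝ) :
    StrictMono (fun x : ℝ => ∫ t in (0:ℝ)..x, (1 + t ^ 2) ^ (-(β + 1))) :=
  strictMono_of_hasDerivAt_pos (Phi_hasDeriv β)
    (fun x => rpow_pos_of_pos (one_add_sq_pos x) _)

lemma cancel_rpow (β : ℝ) (x c : ℝ) :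
    (1 + x ^ 2) ^ (-(β + 1)) * ((1 + x ^ 2) ^ (β + 1) * c) = c := by
  rw [← mul_assoc, ← rpow_add (one_add_sq_pos x), neg_add_cancel, rpow_zero, one_mul]

lemma transform_eq (β : ℝ) (x r : ℝ) :
    x / (r * (1 + x ^ 2) ^ β) = x * (1 + x ^ 2) ^ (-β) / r := by
  rw [rpow_neg (one_add_sq_pos x).le, mul_comm r, ← div_div, div_eq_mul_inv x]

/-- Comparison principle for the slope ODE of rotationally symmetric translators:
a solution starting below a supersolution stays below it. -/
theorem stmt4 (β : ℝ) (hβ : β < 1/2) (I : Set ℝ) (g : ℝ → ℝ)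
    (hgc : ContinuousOn g I) (hganti : AntitoneOn g I)
    (r₀ : ℝ) (hr₀ : 0 < r₀) (v w : ℝ → ℝ)
    (hv : ∀ r ∈ Set.Ici r₀, HasDerivAt v
      ((1 + v r ^ 2) ^ (β + 1) * g (v r / (r * (1 + v r ^ 2) ^ β))) r)
    (hw : ∀ r ∈ Set.Ici r₀, ∃ w' : ℝ, HasDerivAt w w' r ∧
      (1 + w r ^ 2) ^ (β + 1) * g (w r / (r * (1 + w r ^ 2) ^ β)) ≤ w')
    (hvI : ∀ r ∈ Set.Ici r₀, v r / (r * (1 + v r ^ 2) ^ β) ∈ I)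
    (hwI : ∀ r ∈ Set.Ici r₀, w r / (r * (1 + w r ^ 2) ^ β) ∈ I)
    (h0 : v r₀ ≤ w r₀) :
    ∀ r ∈ Set.Ici r₀, v r ≤ w r := by
  set Φ : ℝ → ℝ := fun x => ∫ t in (0:ℝ)..x, (1 + t ^ 2) ^ (-(β + 1)) with hΦdef
  have hΦd : ∀ x, HasDerivAt Φ ((1 + x ^ 2) ^ (-(β + 1))) x := Phi_hasDeriv β
  have hΦm : StrictMono Φ := Phi_mono β
  set f : ℝ → ℝ := fun r => Φ (w r) - Φ (v r) with hfdef
  have hfc : ∀ r ∈ Ici r₀, ContinuousAt f r := by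
    intro r hr
    obtain ⟨W', hW', _⟩ := hw r hr
    exact (((hΦd (w r)).continuousAt.comp hW'.continuousAt).sub
      ((hΦd (v r)).continuousAt.comp (hv r hr).continuousAt))
  have key : ∀ x ∈ Ici r₀, w x ≤ v x → ∃ D, HasDerivAt f D x ∧ 0 ≤ D := by
    intro x hx hwv
    obtain ⟨W', hW', hWge⟩ := hw x hx
    have hdw : HasDerivAt (fun r => Φ (w r)) ((1 + w x ^ 2) ^ (-(β + 1)) * W') x :=
      (hΦd (w x)).comp x hW'
    have hdv : HasDerivAt (fun r => Φ (v r)) ((1 + v x ^ 2) ^ (-(β + 1)) *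
        ((1 + v x ^ 2) ^ (β + 1) * g (v x / (x * (1 + v x ^ 2) ^ β)))) x :=
      (hΦd (v x)).comp x (hv x hx)
    refine ⟨_, hdw.sub hdv, ?_⟩
    rw [cancel_rpow]
    have hxpos : (0:ℝ) < x := lt_of_lt_of_le hr₀ hx
    have hWV : w x / (x * (1 + w x ^ 2) ^ β) ≤ v x / (x * (1 + v x ^ 2) ^ β) := by
      rw [transform_eq, transform_eq]
      have := (psi_mono β hβ).monotone hwv
      exact div_le_div_of_nonneg_right this hxpos.le
    have hg : g (v x / (x * (1 + v x ^ 2) ^ β)) ≤ g (w x / (x * (1 + w x ^ 2) ^ β)) :=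
      hganti (hwI x hx) (hvI x hx) hWV
    have hA : (0:ℝ) ≤ (1 + w x ^ 2) ^ (-(β + 1)) :=
      (rpow_pos_of_pos (one_add_sq_pos _) _).le
    have hmul := mul_le_mul_of_nonneg_left hWge hA
    rw [cancel_rpow] at hmul
    linarith
  intro r hr
  by_contra hlt
  push_neg at hlt
  have hfr : f r < 0 := sub_neg.mpr (hΦm hlt)
  have hfr₀ : 0 ≤ f r₀ := sub_nonneg.mpr (hΦm.monotone h0)
  have hrr : r₀ < r := lt_of_le_of_ne hr (by rintro rfl; exact absurd hfr₀ (not_le.mpr hfr))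
  set K := Icc r₀ r ∩ f ⁻¹' Ici 0 with hKdef
  have hKcl : IsClosed K := by
    apply ContinuousOn.preimage_isClosed_of_isClosed ?_ isClosed_Icc isClosed_Ici
    intro x hx; exact (hfc x hx.1).continuousWithinAt
  have hKcomp : IsCompact K := isCompact_Icc.of_isClosed_subset hKcl inter_subset_left
  have hKne : K.Nonempty := ⟨r₀, ⟨le_refl _, hrr.le⟩, hfr₀⟩
  have hs : sSup K ∈ K := hKcomp.sSup_mem hKne
  set s := sSup K with hsdef
  have hsIcc : s ∈ Icc r₀ r := hs.1
  have hfs : 0 ≤ f s := hs.2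
  have hsr : s < r := lt_of_le_of_ne hsIcc.2 (fun h => absurd hfs (by rw [h]; exact not_le.mpr hfr))
  have hneg : ∀ x ∈ Ioo s r, f x ≤ 0 := by
    intro x hx
    by_contra h
    push_neg at h
    have hxK : x ∈ K := ⟨⟨le_trans hsIcc.1 hx.1.le, hx.2.le⟩, h.le⟩
    exact absurd (le_csSup hKcomp.bddAbove hxK) (not_le.mpr hx.1)
  have hwvx : ∀ x ∈ Ioo s r, w x ≤ v x := by
    intro x hx
    have h1 : Φ (w x) ≤ Φ (v x) := sub_nonpos.mp (hneg x hx)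
    exact hΦm.le_iff_le.mp h1
  have hmono : MonotoneOn f (Icc s r) := by
    apply monotoneOn_of_deriv_nonneg (convex_Icc s r)
    · intro x hx
      exact (hfc x (le_trans hsIcc.1 hx.1)).continuousWithinAt
    · rw [interior_Icc]
      intro x hx
      obtain ⟨D, hD, _⟩ := key x (le_trans hsIcc.1 hx.1.le) (hwvx x hx)
      exact hD.differentiableAt.differentiableWithinAt
    · rw [interior_Icc]
      intro x hx
      obtain ⟨D, hD, hDnn⟩ := key x (le_trans hsIcc.1 hx.1.le) (hwvx x hx)
      rw [hD.deriv]; exact hDnn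
  have hle := hmono ⟨le_refl s, hsr.le⟩ ⟨hsr.le, le_refl r⟩ hsr.le
  linarith
end

section
/- Hessian quotient implicit function: For 0 ≤ l < k ≤ n, define γ̃(x,y) = ((C(n−1,l)/C(n−1,k))^{1/(k−l)}) · y · ((C(n−1,k)y + C(n−1,k−1)x)/(C(n−1,l)y + C(n−1,l−1)x))^{1/(k−l)} (the normalized Hessian quotient restricted to (x,y,…,y)). Then for (y,z) in the region {z·((n−k)/(n−l))^{1/(k−l)} < y < z}, the unique x > 0 solving γ̃(x,y) = z is x = g₊(y,z) = C(n−1,k)·y·(z^{k−l} − y^{k−l}) / (C(n−1,k−1)·y^{k−l} − (C(n−1,k)C(n−1,l−1)/C(n−1,l))·z^{k−l}). -/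
open Real

/-! Raising `γ̃(x, y) = z` to the power `k − l` turns it into an equation that is linear in `x`:
`x · (C(n−1,k−1) y^{k−l} − C(n−1,k) C(n−1,l−1)/C(n−1,l) · z^{k−l}) = C(n−1,k) · y · (z^{k−l} − y^{k−l})`.
For `0 < y < z` the right-hand side is nonzero, so for `x > 0` this is equivalent to `x` being the
quotient, whether or not the coefficient of `x` vanishes. When `C(n−1,k) = 0` both sides are
false. -/

lemma eq_div_iff_mul_eq_of_ne_zero {K : Type*} [Field K] {x r d : K} (hx : x ≠ 0) (hr : r ≠ 0) :
    x = r / d ↔ x * d = r := by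
  rcases eq_or_ne d 0 with rfl | hd
  · simp [hx, hr.symm]
  · exact eq_div_iff hd

lemma rpow_inv_mul_mul_rpow_inv_eq_iff {u v y z p : ℝ} (hu : 0 ≤ u) (hv : 0 ≤ v) (hy : 0 ≤ y)
    (hz : 0 ≤ z) (hp : p ≠ 0) :
    u ^ p⁻¹ * y * v ^ p⁻¹ = z ↔ u * y ^ p * v = z ^ p := by
  have hprod : u ^ p⁻¹ * y * v ^ p⁻¹ = (u * y ^ p * v) ^ p⁻¹ := by
    rw [mul_rpow (by positivity) hv, mul_rpow hu (by positivity), rpow_rpow_inv hy hp]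
  rw [hprod, rpow_inv_eq (by positivity) hz hp]

lemma div_mul_mul_div_eq_iff_mul_eq {a b c d x y Y Z : ℝ} (ha : a ≠ 0) (hc : c ≠ 0)
    (hB : c * y + d * x ≠ 0) :
    c / a * Y * ((a * y + b * x) / (c * y + d * x)) = Z ↔
      x * (b * Y - a * d / c * Z) = a * y * (Z - Y) := by
  have hlhs : c / a * Y * ((a * y + b * x) / (c * y + d * x)) =
      c * Y * (a * y + b * x) / (a * (c * y + d * x)) := by
    field_simp
  rw [hlhs, div_eq_iff (mul_ne_zero ha hB)]
  constructor <;> intro h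
  · field_simp
    linear_combination h
  · field_simp at h
    linear_combination h

theorem rpow_quotient_eq_iff {a b c d p x y z : ℝ} (ha : 0 < a) (hb : 0 ≤ b) (hc : 0 < c)
    (hd : 0 ≤ d) (hp : 0 < p) (hx : 0 < x) (hy : 0 < y) (hyz : y < z) :
    (c / a) ^ (1 / p) * y * ((a * y + b * x) / (c * y + d * x)) ^ (1 / p) = z ↔
      x = a * y * (z ^ p - y ^ p) / (b * y ^ p - a * d / c * z ^ p) := by
  have hyzp : y ^ p < z ^ p := rpow_lt_rpow hy.le hyz hp
  rw [one_div, rpow_inv_mul_mul_rpow_inv_eq_iff (by positivity) (by positivity) hy.le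
      (hy.trans hyz).le hp.ne', div_mul_mul_div_eq_iff_mul_eq ha.ne' hc.ne' (by positivity),
    eq_div_iff_mul_eq_of_ne_zero hx.ne' (mul_pos (mul_pos ha hy) (sub_pos.mpr hyzp)).ne']

theorem stmt10_general (n k l : ℕ) (hl : l < k)
    (y z x : ℝ) (hx : 0 < x) (hy : 0 < y) (hz : 0 < z)
    (hy2 : y < z) :
    let Cnk : ℝ := ((n - 1).choose k : ℝ)
    let Cnk1 : ℝ := ((n - 1).choose (k - 1) : ℝ)
    let Cnl : ℝ := ((n - 1).choose l : ℝ)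
    let Cnl1 : ℝ := if l = 0 then 0 else ((n - 1).choose (l - 1) : ℝ)
    let γ : ℝ → ℝ → ℝ := fun x' y' =>
      (Cnl / Cnk) ^ (1 / ((k : ℝ) - l)) * y' *
        ((Cnk * y' + Cnk1 * x') / (Cnl * y' + Cnl1 * x')) ^ (1 / ((k : ℝ) - l))
    (γ x y = z ↔
      x = Cnk * y * (z ^ ((k : ℝ) - l) - y ^ ((k : ℝ) - l)) /
            (Cnk1 * y ^ ((k : ℝ) - l) - (Cnk * Cnl1 / Cnl) * z ^ ((k : ℝ) - l))) := by
  intro Cnk Cnk1 Cnl Cnl1 γ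
  have hp : 0 < (k : ℝ) - l := sub_pos.mpr (by exact_mod_cast hl)
  rcases lt_or_ge (n - 1) k with hkn | hkn
  · have hCnk : Cnk = 0 := by simp [Cnk, Nat.choose_eq_zero_of_lt hkn]
    have hγ : γ x y = 0 := by
      simp [γ, hCnk, zero_rpow (inv_ne_zero hp.ne')]
    simp [hγ, hCnk, hz.ne, hx.ne']
  · have hCnl1 : 0 ≤ Cnl1 := by simp only [Cnl1]; split_ifs <;> positivity
    exact rpow_quotient_eq_iff (by positivity [Nat.choose_pos hkn]) (by positivity)
      (by positivity [Nat.choose_pos (hl.le.trans hkn)]) hCnl1 hp hx hy hy2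

/-- Explicit implicit function for normalized Hessian quotients restricted to
`(x,y,…,y)`: in the region `z·((n−k)/(n−l))^{1/(k−l)} < y < z`, `0 < y`, the unique
`x > 0` with `γ̃(x,y) = z` is the stated rational expression. -/
theorem stmt10 (n k l : ℕ) (hl : l < k) (hk : k ≤ n)
    (y z x : ℝ) (hx : 0 < x) (hy : 0 < y) (hz : 0 < z)
    (hy1 : z * (((n : ℝ) - k) / ((n : ℝ) - l)) ^ (1 / ((k : ℝ) - l)) < y)
    (hy2 : y < z) :
    let Cnk : ℝ := ((n - 1).choose k : ℝ)
    let Cnk1 : ℝ := ((n - 1).choose (k - 1) : ℝ)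
    let Cnl : ℝ := ((n - 1).choose l : ℝ)
    let Cnl1 : ℝ := if l = 0 then 0 else ((n - 1).choose (l - 1) : ℝ)
    let γ : ℝ → ℝ → ℝ := fun x' y' =>
      (Cnl / Cnk) ^ (1 / ((k : ℝ) - l)) * y' *
        ((Cnk * y' + Cnk1 * x') / (Cnl * y' + Cnl1 * x')) ^ (1 / ((k : ℝ) - l))
    (γ x y = z ↔
      x = Cnk * y * (z ^ ((k : ℝ) - l) - y ^ ((k : ℝ) - l)) /
            (Cnk1 * y ^ ((k : ℝ) - l) - (Cnk * Cnl1 / Cnl) * z ^ ((k : ℝ) - l))) :=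
  stmt10_general n k l hl y z x hx hy hz hy2
end
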